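/- Let V be a weighted digraph on vertex set N, and for each k let A_k be the algebra of subsets of N generated by the vertex sets of the trees of all minimal-weight spanning forests with k trees. Then the sequence of algebras is increasing: A_1 = {∅, N} ⊆ A_2 ⊆ … ⊆ A_{N-1} ⊆ A_N = 2^N. -/

import Mathlib

open Relation

/-- The arc relation of a functional digraph: `F i = some j` means there is an arc `i → j`. -/
def Arc {V : Type*} (F : V → Option V) (i j : V) : Prop := F i = some j

/-- A directed forest: a functional digraph (out-degree ≤ 1) without directed circuits. -/
def IsForest {V : Type*} (F : V → Option V) : Prop :=
  ∀ i, ¬ Relation.TransGen (Arc F) i i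

/-- `j` is accessible from `i` by a directed walk. -/
def Reaches {V : Type*} (F : V → Option V) (i j : V) : Prop :=
  Relation.ReflTransGen (Arc F) i j

open Classical in
/-- The `D`-exchange of `F` by `G`: replace the outgoing arcs (in `F`) of vertices of `D`
by their outgoing arcs in `G`. -/
noncomputable def exchange {V : Type*} (D : Set V) (F G : V → Option V) : V → Option V :=
  fun i => if i ∈ D then G i else F i

/-- The set of vertices of the tree of the forest `F` with root `r`. -/
def treeSet {V : Type*} (F : V → Option V) (r : V) : Set V := {i | Reaches F i r}

section Weighted

variable {V : Type*} [Fintype V] [DecidableEq V]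

/-- A spanning forest of the digraph with arc relation `A`. -/
def IsSpanningForest (A : V → V → Prop) (F : V → Option V) : Prop :=
  IsForest F ∧ ∀ i j, F i = some j → A i j

/-- The number of trees (= roots) of a forest. -/
def numTrees (F : V → Option V) : ℕ :=
  (Finset.univ.filter (fun i => F i = none)).card

/-- The weight of a forest: the sum of the weights of its arcs. -/
noncomputable def weight (w : V → V → ℝ) (F : V → Option V) : ℝ :=
  ∑ i, (F i).elim 0 (w i)

/-- `F` is a minimal-weight (extreme) spanning forest with `k` trees. -/
def ExtremeForest (A : V → V → Prop) (w : V → V → ℝ) (k : ℕ) (F : V → Option V) : Prop :=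
  IsSpanningForest A F ∧ numTrees F = k ∧
    ∀ G, IsSpanningForest A G → numTrees G = k → weight w F ≤ weight w G

/-- `φ_k`: the minimum weight of a spanning forest with exactly `k` trees. -/
noncomputable def phi (A : V → V → Prop) (w : V → V → ℝ) (k : ℕ) : ℝ :=
  sInf (weight w '' {F | IsSpanningForest A F ∧ numTrees F = k})

end Weighted

section Algebras

variable {V : Type*} [Fintype V] [DecidableEq V]

/-- The generating family of `A_k`: vertex sets of trees of minimal-weight spanning
`k`-forests. -/
def genSets (A : V → V → Prop) (w : V → V → ℝ) (k : ℕ) : Set (Set V) :=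
  {S | ∃ F r, ExtremeForest A w k F ∧ F r = none ∧ S = treeSet F r}

/-- The algebra `A_k` of subsets of the vertex set generated by the vertex sets of trees of
minimal-weight spanning `k`-forests. -/
noncomputable def alg (A : V → V → Prop) (w : V → V → ℝ) (k : ℕ) : MeasurableSpace V :=
  MeasurableSpace.generateFrom (genSets A w k)

/-- `E` is an elementary set (atom) of the algebra `m`. -/
def IsElementary (m : MeasurableSpace V) (E : Set V) : Prop :=
  @MeasurableSet V m E ∧ E.Nonempty ∧ ∀ S, @MeasurableSet V m S → S ⊆ E → S = ∅ ∨ S = E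

/-- `i` is a marked vertex of level `k`: a root of some minimal-weight spanning `k`-forest. -/
def IsMarked (A : V → V → Prop) (w : V → V → ℝ) (k : ℕ) (i : V) : Prop :=
  ∃ F, ExtremeForest A w k F ∧ F i = none

end Algebras


/-!
Among the minimal-weight spanning `(k+1)`-forests, take `G` closest to a minimal-weight
`k`-forest `F` in Hamming distance. For a set `U` of vertices that is a tree of `F` or of `G`,
swapping the arcs of `F` and `G` on `U` yields two spanning forests whose weights add up to
`weight F + weight G` and whose numbers of trees add up to `2k + 1`; when the swap taking `F`
towards `G` has `k + 1` trees, both swaps are minimal, and closeness of `G` forces every arc in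
which `G` differs from `F` to start in `U`.
Since `G` has more trees than `F`, some tree `D` of `G` contains no root of `F`; swapping on `D`
confines the differences to `D`, so every other root of `G` is a root of `F`. The tree `T` of
`F` containing the root `s₀` of `D` then contains exactly two roots of `G` (namely `s₀` and the
root of `T`), and swapping on `T` confines the differences to `T` as well. Hence every tree of
`G` lies in a tree of `F`, so every generator of `A_k` is a union of generators of `A_{k+1}`.
-/

open Relation Finset Function

theorem Relation.TransGen.mono_of_invariant {α : Type*} {r p : α → α → Prop} {P : α → Prop}
    {a b : α} (hP : ∀ a b, r a b → P a → P b) (hp : ∀ a b, r a b → P a → p a b)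
    (h : TransGen r a b) (ha : P a) : TransGen p a b := by
  induction h using TransGen.head_induction_on with
  | single hab => exact .single (hp _ _ hab ha)
  | head hac _ ih => exact .head (hp _ _ hac ha) (ih (hP _ _ hac ha))

section Forest

variable {V : Type*} {F G : V → Option V} {j r s x y : V}

lemma arc_rightUnique : Relator.RightUnique (Arc F) :=
  fun _ _ _ h₁ h₂ => Option.some_injective _ (h₁.symm.trans h₂)

lemma Reaches.eq_of_root (h : Reaches F r j) (hr : F r = none) : j = r :=
  (reflTransGen_iff_eq fun b hb => by simp [Arc, hr] at hb).mp h

lemma eq_of_mem_treeSet (hr : F r = none) (hs : F s = none) (hxr : x ∈ treeSet F r)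
    (hxs : x ∈ treeSet F s) : r = s := by
  rcases ReflTransGen.total_of_right_unique arc_rightUnique hxr hxs with h | h
  · exact (Reaches.eq_of_root h hr).symm
  · exact Reaches.eq_of_root h hs

lemma mem_treeSet_self : r ∈ treeSet F r := ReflTransGen.refl

lemma mem_treeSet_of_arc (hr : F r = none) (hx : x ∈ treeSet F r) (hxy : F x = some y) :
    y ∈ treeSet F r := by
  rcases ReflTransGen.total_of_right_unique arc_rightUnique hx (.single hxy) with h | h
  · exact Reaches.eq_of_root h hr ▸ mem_treeSet_self
  · exact h

lemma notMem_treeSet_of_arc (hx : x ∉ treeSet F r) (hxy : F x = some y) : y ∉ treeSet F r :=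
  fun hy => hx (hy.head hxy)

lemma IsForest.wellFounded [Finite V] (hF : IsForest F) : WellFounded (swap (Arc F)) :=
  have : Std.Irrefl (TransGen (swap (Arc F))) := ⟨fun i h => hF i (transGen_swap.mp h)⟩
  Subrelation.wf TransGen.single (Finite.wellFounded_of_trans_of_irrefl _)

lemma IsForest.exists_root [Finite V] (hF : IsForest F) (i : V) :
    ∃ r, Reaches F i r ∧ F r = none := by
  obtain ⟨r, hir, hmax⟩ := hF.wellFounded.has_min {j | Reaches F i j} ⟨i, .refl⟩
  refine ⟨r, hir, ?_⟩
  cases hr : F r with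
  | none => rfl
  | some j => exact absurd (show Arc F r j from hr) (hmax j (hir.tail hr))

def Refines (G F : V → Option V) : Prop :=
  ∀ s, G s = none → ∃ r, F r = none ∧ treeSet G s ⊆ treeSet F r

lemma treeSet_subset_treeSet {r : V} (hs : s ∈ treeSet F r)
    (h : ∀ a ∈ treeSet G s, G a ≠ F a → a ∈ treeSet F r) : treeSet G s ⊆ treeSet F r := by
  intro x hx
  induction hx using ReflTransGen.head_induction_on with
  | refl => exact hs
  | @head a c hac hcs ih =>
    by_cases hGF : G a = F a
    · exact ReflTransGen.head (show F a = some c by rw [← hGF]; exact hac) ih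
    · exact h a (ReflTransGen.head hac hcs) hGF

lemma Refines.treeSet_eq_biUnion [Finite V] (h : Refines G F) (hG : IsForest G)
    (hr : F r = none) :
    treeSet F r = ⋃ s ∈ {s | G s = none ∧ treeSet G s ⊆ treeSet F r}, treeSet G s := by
  refine subset_antisymm (fun x hx => ?_) (Set.iUnion₂_subset fun s hs => hs.2)
  obtain ⟨s, hxs, hs⟩ := hG.exists_root x
  obtain ⟨ρ, hρ, hsub⟩ := h s hs
  obtain rfl : ρ = r := eq_of_mem_treeSet hρ hr (hsub hxs) hx
  exact Set.mem_biUnion ⟨hs, hsub⟩ hxs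

lemma isForest_none : IsForest (fun _ : V => none) :=
  fun _ h => by simpa [Arc] using TransGen.head'_iff.mp h

lemma treeSet_none : treeSet (fun _ : V => none) r = {r} := by
  ext x
  exact ⟨fun h => Reaches.eq_of_root h rfl ▸ rfl, fun h => h ▸ mem_treeSet_self⟩

end Forest

section Exchange

variable {V : Type*} {F G : V → Option V} {U : Set V} {i r : V}

lemma exchange_of_mem (h : i ∈ U) : exchange U F G i = G i := if_pos h

lemma exchange_of_notMem (h : i ∉ U) : exchange U F G i = F i := if_neg h

lemma exchange_compl : exchange Uᶜ F G = exchange U G F := by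
  funext i
  by_cases h : i ∈ U
  · rw [exchange_of_notMem (Set.notMem_compl_iff.mpr h), exchange_of_mem h]
  · rw [exchange_of_mem (Set.mem_compl h), exchange_of_notMem h]

/-- A circuit of the exchange either meets `U`, and then never leaves it, or avoids `U`. -/
lemma isForest_exchange (hF : IsForest F) (hG : IsForest G)
    (hU : ∀ x ∈ U, ∀ y, G x = some y → y ∈ U) : IsForest (exchange U F G) := by
  have hin : ∀ x y, Arc (exchange U F G) x y → x ∈ U → y ∈ U ∧ Arc G x y := fun x y hxy hx => by
    rw [Arc, exchange_of_mem hx] at hxy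
    exact ⟨hU x hx y hxy, hxy⟩
  intro i hi
  by_cases hiU : i ∈ U
  · exact hG i (hi.mono_of_invariant (fun x y hxy hx => (hin x y hxy hx).1)
      (fun x y hxy hx => (hin x y hxy hx).2) hiU)
  · have hout : ∀ x y, Arc (exchange U F G) y x → x ∉ U → y ∉ U :=
      fun x y hyx hx hy => hx (hin y x hyx hy).1
    refine hF i (transGen_swap.mp ((transGen_swap.mpr hi).mono_of_invariant hout
      (fun x y hyx hx => ?_) hiU))
    change exchange U F G y = some x at hyx
    rwa [exchange_of_notMem (hout x y hyx hx)] at hyx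

lemma isForest_exchange_treeSet (hF : IsForest F) (hG : IsForest G) (hr : G r = none) :
    IsForest (exchange (treeSet G r) F G) ∧ IsForest (exchange (treeSet G r) G F) :=
  ⟨isForest_exchange hF hG fun _ hx _ hxy => mem_treeSet_of_arc hr hx hxy,
    exchange_compl (F := F) ▸
      isForest_exchange hF hG fun _ hx _ hxy => notMem_treeSet_of_arc hx hxy⟩

lemma isSpanningForest_exchange {A : V → V → Prop} (hF : IsSpanningForest A F)
    (hG : IsSpanningForest A G) (h : IsForest (exchange U F G)) :
    IsSpanningForest A (exchange U F G) := by
  refine ⟨h, fun i j hij => ?_⟩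
  by_cases hi : i ∈ U
  · rw [exchange_of_mem hi] at hij
    exact hG.2 i j hij
  · rw [exchange_of_notMem hi] at hij
    exact hF.2 i j hij

open scoped Classical

variable [Fintype V]

lemma weight_exchange_add_weight_exchange (w : V → V → ℝ) :
    weight w (exchange U F G) + weight w (exchange U G F) = weight w F + weight w G := by
  simp only [weight, ← Finset.sum_add_distrib]
  refine Finset.sum_congr rfl fun i _ => ?_
  by_cases h : i ∈ U
  · rw [exchange_of_mem h, exchange_of_mem h, add_comm]
  · rw [exchange_of_notMem h, exchange_of_notMem h]

def roots (F : V → Option V) : Finset V := {i | F i = none}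

lemma numTrees_eq_card_roots (F : V → Option V) : numTrees F = #(roots F) := rfl

lemma numTrees_exchange :
    numTrees (exchange U F G) = #{i ∈ roots G | i ∈ U} + #{i ∈ roots F | i ∉ U} := by
  rw [numTrees_eq_card_roots, ← card_union_of_disjoint]
  · congr 1
    ext i
    by_cases h : i ∈ U <;> simp [roots, h, exchange_of_mem, exchange_of_notMem]
  · exact disjoint_filter_filter_not _ _ _

lemma numTrees_exchange_add_card :
    numTrees (exchange U F G) + #{i ∈ roots F | i ∈ U} = #{i ∈ roots G | i ∈ U} + numTrees F := by
  rw [numTrees_exchange, numTrees_eq_card_roots F,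
    ← card_filter_add_card_filter_not (s := roots F) (· ∈ U)]
  ring

lemma numTrees_exchange_add_numTrees_exchange :
    numTrees (exchange U F G) + numTrees (exchange U G F) = numTrees F + numTrees G := by
  rw [numTrees_exchange, numTrees_exchange, numTrees_eq_card_roots F, numTrees_eq_card_roots G,
    ← card_filter_add_card_filter_not (s := roots F) (· ∈ U),
    ← card_filter_add_card_filter_not (s := roots G) (· ∈ U)]
  ring

lemma roots_filter_mem_treeSet (hr : F r = none) : {i ∈ roots F | i ∈ treeSet F r} = {r} := by
  ext i
  simp only [roots, mem_filter, mem_univ, true_and, mem_singleton]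
  constructor
  · exact fun ⟨hi, hir⟩ => eq_of_mem_treeSet hi hr mem_treeSet_self hir
  · rintro rfl
    exact ⟨hr, mem_treeSet_self⟩

lemma mem_of_hammingDist_le_hammingDist_exchange
    (h : hammingDist G F ≤ hammingDist (exchange U F G) F) {x : V} (hx : G x ≠ F x) : x ∈ U := by
  have hfilter : hammingDist (exchange U F G) F = #{i ∈ {i | G i ≠ F i} | i ∈ U} := by
    simp only [hammingDist, filter_filter]
    congr 1
    ext i
    by_cases hi : i ∈ U <;> simp [hi, exchange_of_mem, exchange_of_notMem]
  rw [hfilter] at h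
  exact card_filter_eq_iff.mp (le_antisymm (card_filter_le _ _) h) x (by simpa using hx)

end Exchange

section Extreme

open scoped Classical

variable {V : Type*} [Fintype V] {A : V → V → Prop} {w : V → V → ℝ} {k l : ℕ}
  {F G : V → Option V} {U : Set V} {r : V}

lemma exists_extremeForest (h : ∃ F, IsSpanningForest A F ∧ numTrees F = k) :
    ∃ F, ExtremeForest A w k F := by
  obtain ⟨F, ⟨hF, hk⟩, hmin⟩ := Set.exists_min_image _ (weight w) (Set.toFinite _) h
  exact ⟨F, hF, hk, fun G hG hGk => hmin G ⟨hG, hGk⟩⟩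

lemma extremeForest_exchange (hF : ExtremeForest A w k F) (hG : ExtremeForest A w l G)
    (hX : IsForest (exchange U F G)) (hY : IsForest (exchange U G F))
    (hn : numTrees (exchange U F G) = l) : ExtremeForest A w l (exchange U F G) := by
  have hYk : numTrees (exchange U G F) = k := by
    have := numTrees_exchange_add_numTrees_exchange (U := U) (F := F) (G := G)
    rw [hn, hF.2.1, hG.2.1] at this
    omega
  have hYw := hF.2.2 _ (isSpanningForest_exchange hG.1 hF.1 hY) hYk
  have hsum := weight_exchange_add_weight_exchange (U := U) (F := F) (G := G) w
  refine ⟨isSpanningForest_exchange hF.1 hG.1 hX, hn, fun H hH hHl => ?_⟩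
  linarith [hG.2.2 H hH hHl]

lemma treeSet_eq_univ_of_numTrees_eq_one (hF : IsForest F) (h1 : numTrees F = 1)
    (hr : F r = none) : treeSet F r = Set.univ := by
  refine Set.eq_univ_of_forall fun x => ?_
  obtain ⟨s, hxs, hs⟩ := hF.exists_root x
  obtain rfl : s = r :=
    card_le_one.mp h1.le s (by simpa [roots] using hs) r (by simpa [roots] using hr)
  exact hxs

lemma eq_none_of_numTrees_eq_card (h : numTrees F = Fintype.card V) : F = fun _ => none := by
  funext i
  exact filter_eq_self.mp (eq_univ_of_card _ h) i (mem_univ i)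

lemma extremeForest_none : ExtremeForest A w (Fintype.card V) (fun _ => none) := by
  refine ⟨⟨isForest_none, fun _ _ h => nomatch h⟩, by simp [numTrees], fun G _ hG => ?_⟩
  rw [eq_none_of_numTrees_eq_card hG]

lemma exists_root_forall_notMem_treeSet (hG : IsForest G) (h : numTrees F < numTrees G) :
    ∃ s, G s = none ∧ ∀ r, F r = none → r ∉ treeSet G s := by
  by_contra! hcon
  choose g hg using hG.exists_root
  have hsurj : Set.SurjOn g (roots F) (roots G) := fun s hs => by
    obtain ⟨r, hr, hrs⟩ := hcon s (by simpa [roots] using hs)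
    exact ⟨r, by simpa [roots] using hr,
      eq_of_mem_treeSet (hg r).2 (by simpa [roots] using hs) (hg r).1 hrs⟩
  exact h.not_ge (card_le_card_of_surjOn g hsurj)

lemma roots_filter_mem_treeSet_eq_pair {s₀ ρ : V} (hs₀ : G s₀ = none)
    (hρ : F ρ = none) (hs₀ρ : s₀ ∈ treeSet F ρ) (hρs₀ : ρ ∉ treeSet G s₀)
    (hagree : ∀ x ∉ treeSet G s₀, G x = F x) :
    {i ∈ roots G | i ∈ treeSet F ρ} = {s₀, ρ} := by
  ext i
  simp only [roots, mem_filter, mem_univ, true_and, mem_insert, mem_singleton]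
  constructor
  · rintro ⟨hi, hiρ⟩
    by_cases his₀ : i ∈ treeSet G s₀
    · exact .inl (eq_of_mem_treeSet hi hs₀ mem_treeSet_self his₀)
    · exact .inr (eq_of_mem_treeSet (hagree i his₀ ▸ hi) hρ mem_treeSet_self hiρ)
  · rintro (rfl | rfl)
    · exact ⟨hs₀, hs₀ρ⟩
    · exact ⟨(hagree i hρs₀).trans hρ, mem_treeSet_self⟩

lemma ExtremeForest.exists_refines (hF : ExtremeForest A w k F)
    (hex : ∃ G, ExtremeForest A w (k + 1) G) :
    ∃ G, ExtremeForest A w (k + 1) G ∧ Refines G F := by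
  obtain ⟨G, hG, hmin⟩ := Set.exists_min_image {G | ExtremeForest A w (k + 1) G}
    (hammingDist · F) (Set.toFinite _) hex
  have hdiff : ∀ U, IsForest (exchange U F G) → IsForest (exchange U G F) →
      numTrees (exchange U F G) = k + 1 → ∀ x, G x ≠ F x → x ∈ U := fun U hX hY hn _ =>
    mem_of_hammingDist_le_hammingDist_exchange (hmin _ (extremeForest_exchange hF hG hX hY hn))
  obtain ⟨s₀, hs₀, hfree⟩ :=
    exists_root_forall_notMem_treeSet hG.1.1 (by rw [hF.2.1, hG.2.1]; omega)
  have hD : ∀ x, G x ≠ F x → x ∈ treeSet G s₀ := by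
    obtain ⟨hX, hY⟩ := isForest_exchange_treeSet hF.1.1 hG.1.1 hs₀
    refine hdiff _ hX hY ?_
    have := numTrees_exchange_add_card (U := treeSet G s₀) (F := F) (G := G)
    rw [roots_filter_mem_treeSet hs₀, hF.2.1,
      filter_false_of_mem fun r hr => hfree r (by simpa [roots] using hr)] at this
    simpa [add_comm] using this
  have hagree : ∀ x ∉ treeSet G s₀, G x = F x := fun x hx => by_contra fun h => hx (hD x h)
  obtain ⟨ρ, hs₀ρ, hρ⟩ := hF.1.1.exists_root s₀
  have hρs₀ : ρ ∉ treeSet G s₀ := hfree ρ hρ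
  have hT : ∀ x, G x ≠ F x → x ∈ treeSet F ρ := by
    obtain ⟨hY, hX⟩ := isForest_exchange_treeSet hG.1.1 hF.1.1 hρ
    refine hdiff _ hX hY ?_
    have := numTrees_exchange_add_card (U := treeSet F ρ) (F := F) (G := G)
    rw [roots_filter_mem_treeSet hρ, roots_filter_mem_treeSet_eq_pair hs₀ hρ hs₀ρ hρs₀ hagree,
      card_singleton, card_pair (ne_of_mem_of_not_mem mem_treeSet_self hρs₀), hF.2.1] at this
    omega
  refine ⟨G, hG, fun s hs => ?_⟩
  by_cases hss₀ : s = s₀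
  · exact ⟨ρ, hρ, hss₀ ▸ treeSet_subset_treeSet hs₀ρ fun a _ ha => hT a ha⟩
  · have hsD : s ∉ treeSet G s₀ := fun h => hss₀ (eq_of_mem_treeSet hs hs₀ mem_treeSet_self h)
    refine ⟨s, hagree s hsD ▸ hs, treeSet_subset_treeSet mem_treeSet_self fun a ha haF => ?_⟩
    exact absurd (eq_of_mem_treeSet hs hs₀ ha (hD a haF)) hss₀

end Extreme

section Algebra

variable {V : Type*} [Fintype V] {A : V → V → Prop} {w : V → V → ℝ} {k : ℕ}

lemma alg_one : alg A w 1 = ⊥ :=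
  le_bot_iff.mp <| MeasurableSpace.generateFrom_le fun _ ⟨_, _, hF, hr, hS⟩ =>
    hS ▸ treeSet_eq_univ_of_numTrees_eq_one hF.1.1 hF.2.1 hr ▸ .univ

lemma alg_card : alg A w (Fintype.card V) = ⊤ := by
  refine top_le_iff.mp fun S _ => ?_
  rw [← Set.biUnion_of_singleton S]
  exact .biUnion (Set.to_countable S) fun x _ => MeasurableSpace.measurableSet_generateFrom
    ⟨_, x, extremeForest_none, rfl, treeSet_none.symm⟩

lemma alg_le_alg_succ (hex : ∃ G, ExtremeForest A w (k + 1) G) : alg A w k ≤ alg A w (k + 1) := by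
  refine MeasurableSpace.generateFrom_le ?_
  rintro _ ⟨F, r, hF, hr, rfl⟩
  obtain ⟨G, hG, hGF⟩ := hF.exists_refines hex
  rw [hGF.treeSet_eq_biUnion hG.1.1 hr]
  exact .biUnion (Set.to_countable _) fun s hs =>
    MeasurableSpace.measurableSet_generateFrom ⟨G, s, hG, hs.1, rfl⟩

end Algebra

theorem alg_monotone_general {V : Type*} [Fintype V]
    (A : V → V → Prop) (w : V → V → ℝ)
    (hEx : ∀ k, 1 ≤ k → k ≤ Fintype.card V →
      ∃ F, IsSpanningForest A F ∧ numTrees F = k) :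
    alg A w 1 = ⊥ ∧
      (∀ k, 1 ≤ k → k < Fintype.card V → alg A w k ≤ alg A w (k + 1)) ∧
      alg A w (Fintype.card V) = ⊤ :=
  ⟨alg_one, fun k _ hk => alg_le_alg_succ (exists_extremeForest (hEx (k + 1) (by omega) hk)),
    alg_card⟩

/-- The sequence of algebras `A_k` is increasing: `A_1 = {∅, N}`, `A_k ⊆ A_{k+1}`, and
`A_N = 2^N`. -/
theorem alg_monotone {V : Type*} [Fintype V] [DecidableEq V]
    (A : V → V → Prop) (w : V → V → ℝ)
    (hEx : ∀ k, 1 ≤ k → k ≤ Fintype.card V →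
      ∃ F, IsSpanningForest A F ∧ numTrees F = k) :
    alg A w 1 = ⊥ ∧
      (∀ k, 1 ≤ k → k < Fintype.card V → alg A w k ≤ alg A w (k + 1)) ∧
      alg A w (Fintype.card V) = ⊤ :=
  alg_monotone_general A w hEx
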